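/- Let τᵢ > 0 and M ≥ 0 with Mτᵢ < 1 for each coordinate i, and suppose F : ℝ^d × ℝ^m → [0, M]^d is continuous. For the LTC system xᵢ' = -(1/τᵢ + Fᵢ(x, I(t)))·xᵢ + Aᵢ·Fᵢ(x, I(t)) with continuous input I, every solution satisfies min(0, Aᵢ) ≤ xᵢ(t) ≤ max(0, Aᵢ) for all t ≥ 0 whenever the initial state lies in that box. -/

import Mathlib

/-!
At a point where `xᵢ > max 0 Aᵢ` the right-hand side
`-(1/τᵢ) xᵢ - Fᵢ (xᵢ - Aᵢ)` is nonpositive because `Fᵢ ≥ 0`, and symmetrically it is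
nonnegative where `xᵢ < min 0 Aᵢ`; a scalar barrier argument then keeps each coordinate in
its interval.
-/

theorem image_le_of_hasDerivAt_nonpos_of_lt {g g' : ℝ → ℝ} {a c : ℝ}
    (hg : ∀ t, a ≤ t → HasDerivAt g (g' t) t) (hg' : ∀ t, a ≤ t → c < g t → g' t ≤ 0)
    (ha : g a ≤ c) : ∀ t, a ≤ t → g t ≤ c := by
  intro t ht
  -- The fencing lemma needs a strict inequality at contact, hence the rising barriers.
  have hbarrier : ∀ ε > 0, g t ≤ c + ε * (t - a + 1) := by
    intro ε hε
    refine image_le_of_deriv_right_lt_deriv_boundary (a := a) (b := t)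
      (B := fun s => c + ε * (s - a + 1)) (B' := fun _ => ε)
      (fun s hs => (hg s hs.1).continuousAt.continuousWithinAt)
      (fun s hs => (hg s hs.1).hasDerivWithinAt) (by linarith)
      (fun s => ((hasDerivAt_id' s).sub_const a |>.add_const 1 |>.const_mul ε |>.const_add c
        |>.congr_deriv (by ring)))
      (fun s hs hgs => (hg' s hs.1 (by nlinarith [hs.1])).trans_lt hε) ⟨ht, le_rfl⟩
  refine le_of_forall_pos_le_add fun δ hδ => ?_
  have hpos : 0 < t - a + 1 := by linarith
  simpa [div_mul_cancel₀ δ hpos.ne'] using hbarrier (δ / (t - a + 1)) (by positivity)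

/-- `φ` stands for the activation value `Fᵢ(x, I(t))`. -/
noncomputable def ltcField (τ A φ x : ℝ) : ℝ := -(1 / τ + φ) * x + A * φ

theorem ltcField_nonpos_of_max_lt {τ A φ x : ℝ} (hτ : 0 < τ) (hφ : 0 ≤ φ)
    (hx : max 0 A < x) : ltcField τ A φ x ≤ 0 := by
  obtain ⟨hx0, hxA⟩ := max_lt_iff.mp hx
  have : ltcField τ A φ x = -(1 / τ * x) - φ * (x - A) := by unfold ltcField; ring
  rw [this]
  have := mul_nonneg hφ (sub_nonneg.mpr hxA.le)
  have := mul_pos (one_div_pos.mpr hτ) hx0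
  linarith

theorem ltcField_neg (τ A φ x : ℝ) : ltcField τ (-A) φ (-x) = -ltcField τ A φ x := by
  unfold ltcField; ring

theorem ltcField_nonneg_of_lt_min {τ A φ x : ℝ} (hτ : 0 < τ) (hφ : 0 ≤ φ)
    (hx : x < min 0 A) : 0 ≤ ltcField τ A φ x := by
  have hx' : max 0 (-A) < -x := by
    rw [← neg_zero, max_neg_neg]; exact neg_lt_neg hx
  have := ltcField_nonpos_of_max_lt hτ hφ hx'
  rw [ltcField_neg] at this
  linarith

theorem stmt_10_general (d m : ℕ) (τ : Fin d → ℝ) (hτ : ∀ i, 0 < τ i)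
    (M : ℝ) (A : Fin d → ℝ)
    (F : (Fin d → ℝ) → (Fin m → ℝ) → Fin d → ℝ)
    (hFb : ∀ x I i, F x I i ∈ Set.Icc (0 : ℝ) M)
    (I : ℝ → Fin m → ℝ)
    (x : ℝ → Fin d → ℝ)
    (hx : ∀ t, 0 ≤ t → ∀ i,
      HasDerivAt (fun s => x s i)
        (-(1 / τ i + F (x t) (I t) i) * x t i + A i * F (x t) (I t) i) t)
    (hinit : ∀ i, x 0 i ∈ Set.Icc (min 0 (A i)) (max 0 (A i))) :
    ∀ t, 0 ≤ t → ∀ i, x t i ∈ Set.Icc (min 0 (A i)) (max 0 (A i)) := by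
  intro t ht i
  have hF : ∀ s, 0 ≤ F (x s) (I s) i := fun s => (hFb _ _ i).1
  constructor
  · have := image_le_of_hasDerivAt_nonpos_of_lt (g := fun s => -x s i) (c := -min 0 (A i))
      (fun s hs => (hx s hs i).neg)
      (fun s _ hs => neg_nonpos.mpr
        (ltcField_nonneg_of_lt_min (hτ i) (hF s) (neg_lt_neg_iff.mp hs)))
      (neg_le_neg (hinit i).1) t ht
    exact neg_le_neg_iff.mp this
  · exact image_le_of_hasDerivAt_nonpos_of_lt (g := fun s => x s i)
      (fun s hs => hx s hs i)
      (fun s _ hs => ltcField_nonpos_of_max_lt (hτ i) (hF s) hs)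
      (hinit i).2 t ht

/-- Forward invariance of the box `∏ᵢ [min 0 Aᵢ, max 0 Aᵢ]` for a vector LTC
network with continuous input and activation taking values in `[0, M]`. -/
theorem stmt_10 (d m : ℕ) (τ : Fin d → ℝ) (hτ : ∀ i, 0 < τ i)
    (M : ℝ) (hM : 0 ≤ M) (hMτ : ∀ i, M * τ i < 1) (A : Fin d → ℝ)
    (F : (Fin d → ℝ) → (Fin m → ℝ) → Fin d → ℝ)
    (hFc : Continuous fun p : (Fin d → ℝ) × (Fin m → ℝ) => F p.1 p.2)
    (hFb : ∀ x I i, F x I i ∈ Set.Icc (0 : ℝ) M)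
    (I : ℝ → Fin m → ℝ) (hI : Continuous I)
    (x : ℝ → Fin d → ℝ)
    (hx : ∀ t, 0 ≤ t → ∀ i,
      HasDerivAt (fun s => x s i)
        (-(1 / τ i + F (x t) (I t) i) * x t i + A i * F (x t) (I t) i) t)
    (hinit : ∀ i, x 0 i ∈ Set.Icc (min 0 (A i)) (max 0 (A i))) :
    ∀ t, 0 ≤ t → ∀ i, x t i ∈ Set.Icc (min 0 (A i)) (max 0 (A i)) :=
  stmt_10_general d m τ hτ M A F hFb I x hx hinit
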